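/- Let A ∈ ℝ^{m×n}, b ∈ ℝᵐ, and let P := { x ∈ ℝⁿ : A x ≤ b }. Let P_I denote the convex hull of P ∩ {0,1}ⁿ. Then P_I ⊆ N₊(P), i.e., every point of the convex hull of the 0-1 vectors of P lies in N₊(P). -/

import Mathlib

open Matrix

/-- Frobenius inner product `A ∙ X := trace(Aᵀ X)`. -/
noncomputable def frob {k : ℕ} (A X : Matrix (Fin k) (Fin k) ℝ) : ℝ :=
  Matrix.trace (Aᵀ * X)

/-- The Lovász–Schrijver set `M₊(P)` for the system `A x ≤ b` (rows `a_iᵀ x ≤ b_i`):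
all positive semidefinite `X ∈ ℝ^{(1+n)×(1+n)}` with `(u_i e_jᵀ) ∙ X ≥ 0`,
`(u_i (e₀ − e_j)ᵀ) ∙ X ≥ 0`, `(e_j (e₀ − e_j)ᵀ) ∙ X = 0` and `(e₀ e₀ᵀ) ∙ X = 1`,
where `u_i := (b_i, −a_i)`. -/
def Mplus {m n : ℕ} (A : Matrix (Fin m) (Fin n) ℝ) (b : Fin m → ℝ) :
    Set (Matrix (Fin (n + 1)) (Fin (n + 1)) ℝ) :=
  {X | X.PosSemidef ∧
    (∀ (i : Fin m) (j : Fin n),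
      0 ≤ frob (Matrix.vecMulVec (Fin.cons (b i) (-(A i))) (Pi.single j.succ 1)) X) ∧
    (∀ (i : Fin m) (j : Fin n),
      0 ≤ frob (Matrix.vecMulVec (Fin.cons (b i) (-(A i)))
        (Pi.single 0 1 - Pi.single j.succ 1)) X) ∧
    (∀ j : Fin n,
      frob (Matrix.vecMulVec (Pi.single j.succ 1)
        (Pi.single 0 1 - Pi.single j.succ 1)) X = 0) ∧
    frob (Matrix.vecMulVec (Pi.single (0 : Fin (n + 1)) (1 : ℝ))
      (Pi.single (0 : Fin (n + 1)) (1 : ℝ))) X = 1}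

/-- The Lovász–Schrijver relaxation
`N₊(P) := { x ∈ ℝⁿ : ∃ X ∈ M₊(P), diag(X) = (1, x) }`. -/
def Nplus {m n : ℕ} (A : Matrix (Fin m) (Fin n) ℝ) (b : Fin m → ℝ) :
    Set (Fin n → ℝ) :=
  {x | ∃ X ∈ Mplus A b, Matrix.diag X = Fin.cons 1 x}

/-! A 0-1 point `x` of `P` is the diagonal of the rank-one matrix `y yᵀ` with `y = (1, x)`:
every inequality defining `M₊(P)` then evaluates to a product of two nonnegative slacks of `x`,
and the equations to `x_j (1 - x_j) = 0`. Since `M₊(P)` is convex and `diag` is linear,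
`N₊(P)` is convex, so it contains the convex hull of these points. -/

section Frob

variable {k : ℕ}

lemma frob_vecMulVec (u v y z : Fin k → ℝ) :
    frob (vecMulVec u v) (vecMulVec y z) = (u ⬝ᵥ y) * (v ⬝ᵥ z) := by
  simp only [frob, trace, diag, mul_apply, transpose_apply, vecMulVec_apply, dotProduct,
    Finset.sum_mul_sum]
  rw [Finset.sum_comm]
  exact Finset.sum_congr rfl fun _ _ => Finset.sum_congr rfl fun _ _ => by ring

lemma frob_add_right (M X Y : Matrix (Fin k) (Fin k) ℝ) :
    frob M (X + Y) = frob M X + frob M Y := by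
  simp only [frob, Matrix.mul_add, trace_add]

lemma frob_smul_right (M X : Matrix (Fin k) (Fin k) ℝ) (c : ℝ) :
    frob M (c • X) = c * frob M X := by
  simp only [frob, Matrix.mul_smul, trace_smul, smul_eq_mul]

end Frob

section LovaszSchrijver

variable {m n : ℕ} (A : Matrix (Fin m) (Fin n) ℝ) (b : Fin m → ℝ)

lemma convex_Mplus : Convex ℝ (Mplus A b) := by
  rintro X ⟨hX, hX₁, hX₂, hX₃, hX₄⟩ Y ⟨hY, hY₁, hY₂, hY₃, hY₄⟩ s t hs ht hst
  simp only [Mplus, Set.mem_ofPred_eq, frob_add_right, frob_smul_right]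
  refine ⟨(hX.smul hs).add (hY.smul ht), fun i j => ?_, fun i j => ?_, fun j => ?_, ?_⟩
  · exact add_nonneg (mul_nonneg hs (hX₁ i j)) (mul_nonneg ht (hY₁ i j))
  · exact add_nonneg (mul_nonneg hs (hX₂ i j)) (mul_nonneg ht (hY₂ i j))
  · simp [hX₃ j, hY₃ j]
  · simp [hX₄, hY₄, hst]

lemma convex_Nplus : Convex ℝ (Nplus A b) := by
  rintro x ⟨X, hX, hXx⟩ y ⟨Y, hY, hYy⟩ s t hs ht hst
  refine ⟨s • X + t • Y, convex_Mplus A b hX hY hs ht hst, ?_⟩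
  rw [diag_add, diag_smul, diag_smul, hXx, hYy]
  funext i
  refine Fin.cases ?_ (fun j => ?_) i <;> simp [hst]

variable {A b} {x : Fin n → ℝ}

lemma vecMulVec_cons_one_mem_Mplus (hP : ∀ i, ∑ k, A i k * x k ≤ b i)
    (h01 : ∀ j, x j = 0 ∨ x j = 1) :
    vecMulVec (Fin.cons 1 x) (Fin.cons 1 x) ∈ Mplus A b := by
  have hslack : ∀ i, 0 ≤ (Fin.cons (b i) (-(A i)) : Fin (n + 1) → ℝ) ⬝ᵥ Fin.cons 1 x := by
    intro i
    simp only [dotProduct, Fin.sum_univ_succ, Fin.cons_zero, Fin.cons_succ, mul_one,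
      Pi.neg_apply, neg_mul, Finset.sum_neg_distrib]
    linarith [hP i]
  refine ⟨posSemidef_vecMulVec_self_star _, fun i j => ?_, fun i j => ?_, fun j => ?_, ?_⟩ <;>
    simp only [frob_vecMulVec, single_one_dotProduct, sub_dotProduct, Fin.cons_zero,
      Fin.cons_succ]
  · exact mul_nonneg (hslack i) (by rcases h01 j with h | h <;> simp [h])
  · exact mul_nonneg (hslack i) (by rcases h01 j with h | h <;> simp [h])
  · rcases h01 j with h | h <;> simp [h]
  · simp

lemma mem_Nplus_of_zero_one (hP : ∀ i, ∑ k, A i k * x k ≤ b i)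
    (h01 : ∀ j, x j = 0 ∨ x j = 1) : x ∈ Nplus A b := by
  refine ⟨_, vecMulVec_cons_one_mem_Mplus hP h01, ?_⟩
  rw [diag_vecMulVec]
  funext i
  refine Fin.cases ?_ (fun j => ?_) i
  · simp
  · rcases h01 j with h | h <;> simp [h]

end LovaszSchrijver

/-- With `P := { x : A x ≤ b }` and `P_I := convexHull (P ∩ {0,1}ⁿ)`, we have
`P_I ⊆ N₊(P)`. -/
theorem PI_subset_Nplus {m n : ℕ} (A : Matrix (Fin m) (Fin n) ℝ) (b : Fin m → ℝ) :
    convexHull ℝ ({x : Fin n → ℝ | ∀ i, ∑ k, A i k * x k ≤ b i} ∩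
        {x | ∀ j, x j = 0 ∨ x j = 1}) ⊆ Nplus A b :=
  convexHull_min (fun _ hx => mem_Nplus_of_zero_one hx.1 hx.2) (convex_Nplus A b)
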